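/- Let S be a poset, (G_i) and (H_i) families of terminating games indexed by S such that the supports are well partially ordered, let i₀ ∈ S be maximal, and suppose G_i = H_i for all i ≠ i₀. If Γ₀(G_{i₀}) = Γ₀(H_{i₀}), then the ordered joins satisfy Γ₀(S ⋈ G) = Γ₀(S ⋈ H). -/

import Mathlib

universe u

/-- Nimbers, as in the older Mathlib: a type synonym of `Ordinal`. -/
def Nimber : Type (u + 1) := Ordinal.{u}

namespace Nimber

noncomputable instance : InfSet Nimber.{u} := inferInstanceAs (InfSet Ordinal.{u})

def toOrdinal : Nimber.{u} ≃ Ordinal.{u} := Equiv.refl _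

end Nimber

namespace SetTheory

/-- Pre-games, as in the older Mathlib `SetTheory.PGame`. -/
inductive PGame : Type (u + 1)
  | mk : ∀ α β : Type u, (α → PGame) → (β → PGame) → PGame

namespace PGame

def LeftMoves : PGame → Type u
  | mk l _ _ _ => l

def RightMoves : PGame → Type u
  | mk _ r _ _ => r

def moveLeft : ∀ g : PGame, LeftMoves g → PGame
  | mk _l _ L _ => L

def moveRight : ∀ g : PGame, RightMoves g → PGame
  | mk _ _r _ R => R

instance : Zero PGame :=
  ⟨⟨PEmpty, PEmpty, PEmpty.elim, PEmpty.elim⟩⟩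

/-- Negation of a pre-game. -/
def neg : PGame → PGame
  | ⟨l, r, L, R⟩ => ⟨r, l, fun i => neg (R i), fun i => neg (L i)⟩

/-- The pair (`x ≤ y`, `x ⧏ y`) of the older Mathlib. -/
noncomputable def leLf (x : PGame.{u}) : PGame.{u} → Prop × Prop :=
  PGame.rec (motive := fun _ => PGame.{u} → Prop × Prop)
    (fun _xl _xr _xL _xR ihL ihR y =>
      PGame.rec (motive := fun _ => Prop × Prop)
        (fun yl yr yL yR jhL jhR =>
          ((∀ i, (ihL i (mk yl yr yL yR)).2) ∧ ∀ j, (jhR j).2,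
            (∃ i, (jhL i).1) ∨ ∃ j, (ihR j (mk yl yr yL yR)).1)) y) x

def le (x y : PGame.{u}) : Prop := (leLf x y).1

/-- Equivalence `x ≈ y` of pre-games. -/
def Equiv (x y : PGame.{u}) : Prop := le x y ∧ le y x

def ImpartialAux : PGame.{u} → Prop
  | ⟨l, r, L, R⟩ => Equiv ⟨l, r, L, R⟩ (neg ⟨l, r, L, R⟩) ∧
      (∀ i, ImpartialAux (L i)) ∧ ∀ j, ImpartialAux (R j)

/-- Impartial pre-games, as in the older Mathlib. -/
class Impartial (G : PGame.{u}) : Prop where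
  out : ImpartialAux G

/-- The Grundy value (mex of the Grundy values of the left options), as in the older Mathlib. -/
noncomputable def grundyValue : PGame.{u} → Nimber.{u}
  | ⟨_, _, L, _⟩ => sInf (Set.range fun i => grundyValue (L i))ᶜ

end PGame

end SetTheory

open SetTheory PGame Nimber

noncomputable section
open Classical in
/-- The state resulting from a (Left) move in component `i₀` of an ordered join:
all components strictly above `i₀` are replaced by the empty game `0`. -/
def ojNextL {S : Type} [PartialOrder S] (x : S → PGame) (i₀ : S) (j : (x i₀).LeftMoves) :
    S → PGame :=
  fun i => if i = i₀ then (x i₀).moveLeft j else if i₀ < i then 0 else x i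

open Classical in
def ojNextR {S : Type} [PartialOrder S] (x : S → PGame) (i₀ : S) (j : (x i₀).RightMoves) :
    S → PGame :=
  fun i => if i = i₀ then (x i₀).moveRight j else if i₀ < i then 0 else x i

/-- The move relation of the ordered join: `OJRel y x` iff `y` results from `x` by a single move. -/
def OJRel {S : Type} [PartialOrder S] (y x : S → PGame) : Prop :=
  (∃ i₀ j, y = ojNextL x i₀ j) ∨ (∃ i₀ j, y = ojNextR x i₀ j)

theorem ojrel_L {S : Type} [PartialOrder S] (x : S → PGame) (i₀ : S) (j : (x i₀).LeftMoves) :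
    OJRel (ojNextL x i₀ j) x := Or.inl ⟨i₀, j, rfl⟩

theorem ojrel_R {S : Type} [PartialOrder S] (x : S → PGame) (i₀ : S) (j : (x i₀).RightMoves) :
    OJRel (ojNextR x i₀ j) x := Or.inr ⟨i₀, j, rfl⟩

/-- The ordered join of a family of games, as a game, given a termination certificate. -/
def ojoinAcc {S : Type} [PartialOrder S] : ∀ x : S → PGame, Acc OJRel x → PGame := fun x h =>
  Acc.rec (motive := fun x _ => PGame)
    (fun x _ ih =>
      PGame.mk (Σ i₀ : S, (x i₀).LeftMoves) (Σ i₀ : S, (x i₀).RightMoves)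
        (fun p => ih _ (ojrel_L x p.1 p.2))
        (fun p => ih _ (ojrel_R x p.1 p.2))) h

open Classical in
/-- The ordered join `S ⋈ G` of a family of games `G` over the poset `S`.
(Defined as `0` in the degenerate non-terminating case.) -/
def ojoin {S : Type} [PartialOrder S] (x : S → PGame) : PGame :=
  if h : Acc OJRel x then ojoinAcc x h else 0

/-- The Grundy set `Γ₁(G)`: the set of Grundy numbers of the options of `G`. -/
def grundySet (G : PGame) : Set Nimber :=
  Set.range fun i => grundyValue (G.moveLeft i)
end


/-!
The Grundy value of a position is the least value not taken by its options, so it suffices to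
show that no option of `S ⋈ G` has the Grundy value of `S ⋈ H` (and symmetrically), by
induction on the pair of positions. A move in a component `i ≠ i₀`, or a move lowering the
Grundy value of component `i₀`, is answered by the same kind of move in `S ⋈ H` that keeps the
two positions related. A move raising the Grundy value of component `i₀` can be reversed by a
second move in component `i₀` back to a position related to `S ⋈ H`. Maximality of `i₀` is what
makes moves in component `i₀` leave all other components untouched.
-/

noncomputable instance : ConditionallyCompleteLinearOrderBot Nimber.{u} :=
  inferInstanceAs (ConditionallyCompleteLinearOrderBot Ordinal.{u})

namespace SetTheory.PGame

theorem grundyValue_eq_sInf_compl_grundySet (G : PGame) :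
    grundyValue G = sInf (grundySet G)ᶜ := by
  cases G; rw [grundyValue]; rfl

theorem grundyValue_notMem_grundySet (G : PGame) : grundyValue G ∉ grundySet G := by
  obtain ⟨a, ha⟩ : BddAbove (α := Ordinal) (grundySet G) :=
    @Ordinal.bddAbove_of_small _ (small_range _)
  have hne : (grundySet G)ᶜ.Nonempty :=
    ⟨(Order.succ a : Ordinal), fun h => (Order.lt_succ a).not_ge (ha h)⟩
  rw [grundyValue_eq_sInf_compl_grundySet]
  exact csInf_mem (α := Ordinal) hne

theorem mem_grundySet_of_lt {G : PGame} {v : Nimber} (h : v < grundyValue G) :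
    v ∈ grundySet G := by
  rw [grundyValue_eq_sInf_compl_grundySet] at h
  simpa using notMem_of_lt_csInf' h

theorem grundyValue_le_of_notMem {G : PGame} {v : Nimber} (h : v ∉ grundySet G) :
    grundyValue G ≤ v := by
  rw [grundyValue_eq_sInf_compl_grundySet]
  exact csInf_le' h

theorem moveLeft_cast {A B : PGame} (e : A = B) (j : A.LeftMoves) :
    B.moveLeft (e ▸ j) = A.moveLeft j := by
  subst e; rfl

end SetTheory.PGame

section OrderedJoin

variable {S : Type} [PartialOrder S]

theorem ojNextL_self (x : S → PGame) (i : S) (j : (x i).LeftMoves) :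
    ojNextL x i j i = (x i).moveLeft j := by
  simp [ojNextL]

theorem ojNextL_of_lt (x : S → PGame) {i k : S} (j : (x i).LeftMoves) (h : i < k) :
    ojNextL x i j k = 0 := by
  simp [ojNextL, h.ne', h]

theorem ojNextL_of_ne_of_not_lt (x : S → PGame) {i k : S} (j : (x i).LeftMoves) (hne : k ≠ i)
    (hlt : ¬ i < k) : ojNextL x i j k = x k := by
  simp [ojNextL, hne, hlt]

theorem ojNextL_eq_update [DecidableEq S] {i : S} (hmax : ∀ k, ¬ i < k) (x : S → PGame)
    (j : (x i).LeftMoves) :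
    ojNextL x i j = Function.update x i ((x i).moveLeft j) := by
  funext k
  by_cases hk : k = i
  · subst hk; simp [ojNextL]
  · simp [ojNextL, hk, hmax k]

theorem ojoin_eq_mk (x : S → PGame) (h : Acc OJRel x) :
    ojoin x = PGame.mk (Σ i, (x i).LeftMoves) (Σ i, (x i).RightMoves)
      (fun p => ojoin (ojNextL x p.1 p.2)) (fun p => ojoin (ojNextR x p.1 p.2)) := by
  rw [ojoin, dif_pos h]
  cases h with
  | intro _ hx =>
    change PGame.mk _ _ (fun p : Σ i, (x i).LeftMoves => ojoinAcc _ (hx _ (ojrel_L x p.1 p.2)))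
      (fun p : Σ i, (x i).RightMoves => ojoinAcc _ (hx _ (ojrel_R x p.1 p.2))) = _
    congr 1 <;> funext p <;> rw [ojoin, dif_pos]

theorem grundySet_ojoin {x : S → PGame} (h : Acc OJRel x) :
    grundySet (ojoin x) =
      Set.range fun p : Σ i, (x i).LeftMoves => grundyValue (ojoin (ojNextL x p.1 p.2)) := by
  rw [ojoin_eq_mk x h]; rfl

theorem grundyValue_ojoin_ojNextL_ne {x : S → PGame} (h : Acc OJRel x) (i : S)
    (j : (x i).LeftMoves) : grundyValue (ojoin (ojNextL x i j)) ≠ grundyValue (ojoin x) := by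
  intro hv
  apply grundyValue_notMem_grundySet (ojoin x)
  rw [grundySet_ojoin h]
  exact ⟨⟨i, j⟩, hv⟩

theorem grundyValue_ojoin_le_of_forall_ne {x : S → PGame} (h : Acc OJRel x) {v : Nimber}
    (hv : ∀ i j, grundyValue (ojoin (ojNextL x i j)) ≠ v) : grundyValue (ojoin x) ≤ v := by
  apply grundyValue_le_of_notMem
  rw [grundySet_ojoin h]
  rintro ⟨⟨i, j⟩, hij⟩
  exact hv i j hij

end OrderedJoin

def SameGrundyAt {S : Type} (i₀ : S) (G H : S → PGame) : Prop :=
  (∀ i, i ≠ i₀ → G i = H i) ∧ grundyValue (G i₀) = grundyValue (H i₀)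

namespace SameGrundyAt

variable {S : Type} {i₀ : S} {G H : S → PGame}

theorem symm (h : SameGrundyAt i₀ G H) : SameGrundyAt i₀ H G :=
  ⟨fun i hi => (h.1 i hi).symm, h.2.symm⟩

theorem update [DecidableEq S] (h : SameGrundyAt i₀ G H) {a b : PGame}
    (hab : grundyValue a = grundyValue b) :
    SameGrundyAt i₀ (Function.update G i₀ a) (Function.update H i₀ b) :=
  ⟨fun i hi => by simp only [Function.update_of_ne hi, h.1 i hi], by simpa using hab⟩

variable [PartialOrder S]

theorem ojNextL_of_ne (h : SameGrundyAt i₀ G H) {i : S} (hi : i ≠ i₀) (j : (G i).LeftMoves) :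
    SameGrundyAt i₀ (ojNextL G i j) (ojNextL H i (h.1 i hi ▸ j)) := by
  refine ⟨fun k hk => ?_, ?_⟩
  · by_cases hki : k = i
    · subst hki
      rw [ojNextL_self, ojNextL_self, moveLeft_cast]
    by_cases hik : i < k
    · rw [ojNextL_of_lt G j hik, ojNextL_of_lt H _ hik]
    · rw [ojNextL_of_ne_of_not_lt G j hki hik, ojNextL_of_ne_of_not_lt H _ hki hik, h.1 k hk]
  · by_cases hi₀ : i < i₀
    · rw [ojNextL_of_lt G j hi₀, ojNextL_of_lt H _ hi₀]
    · rw [ojNextL_of_ne_of_not_lt G j hi.symm hi₀, ojNextL_of_ne_of_not_lt H _ hi.symm hi₀, h.2]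

theorem exists_ojNextL_of_lt (h : SameGrundyAt i₀ G H) (hmax : ∀ i, ¬ i₀ < i)
    {j : (G i₀).LeftMoves} (hj : grundyValue ((G i₀).moveLeft j) < grundyValue (G i₀)) :
    ∃ j', SameGrundyAt i₀ (ojNextL G i₀ j) (ojNextL H i₀ j') := by
  classical
  obtain ⟨j', hj'⟩ := mem_grundySet_of_lt (h.2 ▸ hj)
  refine ⟨j', ?_⟩
  rw [ojNextL_eq_update hmax, ojNextL_eq_update hmax]
  exact h.update hj'.symm

theorem exists_ojNextL_ojNextL_of_gt (h : SameGrundyAt i₀ G H) (hmax : ∀ i, ¬ i₀ < i)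
    {j : (G i₀).LeftMoves} (hj : grundyValue (G i₀) < grundyValue ((G i₀).moveLeft j)) :
    ∃ k, SameGrundyAt i₀ (ojNextL (ojNextL G i₀ j) i₀ k) H := by
  classical
  obtain ⟨k, hk⟩ := mem_grundySet_of_lt hj
  refine ⟨(ojNextL_self G i₀ j).symm ▸ k, ?_⟩
  rw [ojNextL_eq_update hmax, moveLeft_cast, ojNextL_eq_update hmax, Function.update_idem,
    ← Function.update_eq_self i₀ H]
  exact h.update (hk.trans h.2)

theorem grundyValue_ojoin_ojNextL_ne (h : SameGrundyAt i₀ G H) (hmax : ∀ i, ¬ i₀ < i)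
    (hG : Acc OJRel G) (hH : Acc OJRel H)
    (ih : ∀ G' H', Relation.TransGen OJRel G' G → Relation.ReflGen OJRel H' H →
      SameGrundyAt i₀ G' H' → grundyValue (ojoin G') = grundyValue (ojoin H'))
    (i : S) (j : (G i).LeftMoves) :
    grundyValue (ojoin (ojNextL G i j)) ≠ grundyValue (ojoin H) := by
  intro hv
  have answer : ∀ j', SameGrundyAt i₀ (ojNextL G i j) (ojNextL H i j') → False := fun j' h' =>
    _root_.grundyValue_ojoin_ojNextL_ne hH i j' <|
      (ih _ _ (.single (ojrel_L G i j)) (.single (ojrel_L H i j')) h').symm.trans hv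
  by_cases hi : i = i₀
  · subst hi
    rcases lt_trichotomy (grundyValue ((G i).moveLeft j)) (grundyValue (G i)) with hlt | heq | hgt
    · obtain ⟨j', h'⟩ := h.exists_ojNextL_of_lt hmax hlt
      exact answer j' h'
    · exact grundyValue_notMem_grundySet _ ⟨j, heq⟩
    · obtain ⟨k, h''⟩ := h.exists_ojNextL_ojNextL_of_gt hmax hgt
      exact _root_.grundyValue_ojoin_ojNextL_ne (hG.inv (ojrel_L G i j)) i k <|
        (ih _ _ (.head (ojrel_L _ i k) (.single (ojrel_L G i j))) .refl h'').trans hv.symm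
  · exact answer _ (h.ojNextL_of_ne hi j)

theorem grundyValue_ojoin_eq (hmax : ∀ i, ¬ i₀ < i) (hG : Acc (Relation.TransGen OJRel) G)
    (hH : Acc (Relation.TransGen OJRel) H) (h : SameGrundyAt i₀ G H) :
    grundyValue (ojoin G) = grundyValue (ojoin H) := by
  induction hG generalizing H with
  | intro G hGlt ihG =>
  induction hH with
  | intro H hHlt ihH =>
  have accG : Acc OJRel G := acc_transGen_iff.mp (.intro G hGlt)
  have accH : Acc OJRel H := acc_transGen_iff.mp (.intro H hHlt)
  have acc_of_reflGen {H'} (hH' : Relation.ReflGen OJRel H' H) :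
      Acc (Relation.TransGen OJRel) H' := by
    cases hH' with
    | refl => exact .intro H hHlt
    | single r => exact hHlt H' (.single r)
  apply le_antisymm
  · exact grundyValue_ojoin_le_of_forall_ne accG <|
      h.grundyValue_ojoin_ojNextL_ne hmax accG accH fun G' H' hG' hH' h' =>
        ihG G' hG' (acc_of_reflGen hH') h'
  · refine grundyValue_ojoin_le_of_forall_ne accH
      (h.symm.grundyValue_ojoin_ojNextL_ne hmax accH accG fun H' G' hH' hG' h' => ?_)
    cases hG' with
    | refl => exact (ihH H' hH' h'.symm).symm
    | single r => exact (ihG G' (.single r) (hHlt H' hH') h'.symm).symm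

end SameGrundyAt

theorem ojoin_special_substitution_general {S : Type} [PartialOrder S] (G H : S → PGame)
    (hG : Acc OJRel G) (hH : Acc OJRel H)
    (i₀ : S) (hmax : ∀ i : S, ¬ i₀ < i)
    (heq : ∀ i, i ≠ i₀ → G i = H i)
    (h0 : grundyValue (G i₀) = grundyValue (H i₀)) :
    grundyValue (ojoin G) = grundyValue (ojoin H) :=
  SameGrundyAt.grundyValue_ojoin_eq hmax hG.transGen hH.transGen ⟨heq, h0⟩

/-- special substitution: for terminating ordered joins `S ⋈ G` and `S ⋈ H`
in the same shape `S`, a maximal `i₀ ∈ S` with `G i = H i` for all `i ≠ i₀` and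
`Γ₀(G i₀) = Γ₀(H i₀)`, we have `Γ₀(S ⋈ G) = Γ₀(S ⋈ H)`. -/
theorem ojoin_special_substitution {S : Type} [PartialOrder S] (G H : S → PGame)
    (hGI : ∀ i, (G i).Impartial) (hHI : ∀ i, (H i).Impartial)
    (hG : Acc OJRel G) (hH : Acc OJRel H)
    (i₀ : S) (hmax : ∀ i : S, ¬ i₀ < i)
    (heq : ∀ i, i ≠ i₀ → G i = H i)
    (h0 : grundyValue (G i₀) = grundyValue (H i₀)) :
    grundyValue (ojoin G) = grundyValue (ojoin H) :=
  ojoin_special_substitution_general G H hG hH i₀ hmax heq h0
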